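/- arXiv:2201.10993 — 8 statements merged into one kernel-verified Lean document; each statement's English description precedes it below -/
import Mathlib

section
/- Let A be an n×p real matrix (n > p) with rank p−m where 0 < m < p, and let B be an m×p real matrix with rank m whose rows are linearly independent of the rows of A, i.e. the (n+m)×p matrix obtained by stacking A on top of B has rank p. Then the p×p matrix AᵀA + BᵀB is invertible and B (AᵀA + BᵀB)⁻¹ Bᵀ = I_m, the m×m identity matrix. -/
/-!
With `C` the matrix `A` stacked on `B`, `M := AᵀA + BᵀB = CᵀC` has rank `rank C = p`, so it is
invertible. Multiplying out `B M⁻¹ M = B` gives `(B M⁻¹ Aᵀ) A + (B M⁻¹ Bᵀ - 1) B = 0`.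
The rows of the two summands lie in the row spaces of `A` and of `B`, which meet only in `0`
since their dimensions `p - m` and `m` add up to the dimension `p` of their sum. Hence
`(B M⁻¹ Bᵀ - 1) B = 0`, and as the rows of `B` are linearly independent, `B M⁻¹ Bᵀ = 1`.
-/

open Matrix

namespace Matrix

variable {K : Type*} [Field K] {l m n o : Type*}

theorem linearIndependent_row_of_rank_eq_card [Fintype m] [Fintype n] {A : Matrix m n K}
    (h : A.rank = Fintype.card m) : LinearIndependent K A.row := by
  rw [linearIndependent_iff_card_eq_finrank_span, Set.finrank, ← rank_eq_finrank_span_row, h]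

theorem isUnit_of_rank_eq_card [Fintype m] [DecidableEq m] {A : Matrix m m K}
    (h : A.rank = Fintype.card m) : IsUnit A :=
  linearIndependent_rows_iff_isUnit.mp (linearIndependent_row_of_rank_eq_card h)

theorem eq_zero_of_mul_eq_zero_of_linearIndependent_row [Fintype m] [Fintype n]
    {B : Matrix m n K} {Z : Matrix o m K} (hB : LinearIndependent K B.row) (h : Z * B = 0) :
    Z = 0 := by
  funext i
  refine vecMul_injective_iff.mpr hB ?_
  change Z i ᵥ* B = 0 ᵥ* B
  rw [zero_vecMul, ← mul_apply_eq_vecMul, h]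
  rfl

theorem span_range_row_fromRows (A : Matrix l n K) (B : Matrix m n K) :
    Submodule.span K (Set.range (fromRows A B).row) =
      Submodule.span K (Set.range A.row) ⊔ Submodule.span K (Set.range B.row) := by
  rw [← Submodule.span_union, ← Set.Sum.elim_range]
  rfl

theorem disjoint_span_range_row_of_rank_fromRows [Finite l] [Finite m] [Fintype n]
    {A : Matrix l n K} {B : Matrix m n K} (h : A.rank + B.rank ≤ (fromRows A B).rank) :
    Disjoint (Submodule.span K (Set.range A.row)) (Submodule.span K (Set.range B.row)) := by
  rw [rank_eq_finrank_span_row, rank_eq_finrank_span_row, rank_eq_finrank_span_row,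
    span_range_row_fromRows] at h
  rw [disjoint_iff, ← Submodule.finrank_eq_zero]
  have := Submodule.finrank_sup_add_finrank_inf_eq (Submodule.span K (Set.range A.row))
    (Submodule.span K (Set.range B.row))
  omega

theorem mul_eq_zero_of_disjoint_span_range_row [Fintype l] [Fintype m]
    {A : Matrix l n K} {B : Matrix m n K}
    (hAB : Disjoint (Submodule.span K (Set.range A.row)) (Submodule.span K (Set.range B.row)))
    {Y : Matrix o l K} {Z : Matrix o m K} (h : Y * A + Z * B = 0) : Z * B = 0 := by
  funext i
  have hZ : (Z * B) i ∈ Submodule.span K (Set.range B.row) := by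
    rw [← range_vecMulLinear, mul_apply_eq_vecMul]
    exact LinearMap.mem_range_self _ _
  have hY : (Y * A) i ∈ Submodule.span K (Set.range A.row) := by
    rw [← range_vecMulLinear, mul_apply_eq_vecMul]
    exact LinearMap.mem_range_self _ _
  have hYZ : (Z * B) i = -(Y * A) i := eq_neg_of_add_eq_zero_right (congrFun h i)
  exact (Submodule.disjoint_def.mp hAB) _ (hYZ ▸ neg_mem hY) hZ

end Matrix

theorem stmt_1_general (n p m : ℕ)
    (A : Matrix (Fin n) (Fin p) ℝ) (B : Matrix (Fin m) (Fin p) ℝ)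
    (hA : A.rank = p - m) (hB : B.rank = m)
    (hAB : (Matrix.fromRows A B).rank = p) :
    IsUnit (Aᵀ * A + Bᵀ * B) ∧ B * (Aᵀ * A + Bᵀ * B)⁻¹ * Bᵀ = 1 := by
  have hmp : m ≤ p := hB ▸ B.rank_le_width
  have hM : Aᵀ * A + Bᵀ * B = (fromRows A B)ᵀ * fromRows A B := by
    rw [transpose_fromRows, fromCols_mul_fromRows]
  have hunit : IsUnit (Aᵀ * A + Bᵀ * B) := isUnit_of_rank_eq_card <| by
    rw [hM, rank_transpose_mul_self, hAB, Fintype.card_fin]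
  refine ⟨hunit, ?_⟩
  set M := Aᵀ * A + Bᵀ * B
  have hkey : (B * M⁻¹ * Aᵀ) * A + (B * M⁻¹ * Bᵀ - 1) * B = 0 :=
    calc (B * M⁻¹ * Aᵀ) * A + (B * M⁻¹ * Bᵀ - 1) * B = B * M⁻¹ * M - B := by
          simp only [M, Matrix.sub_mul, Matrix.one_mul, Matrix.mul_add, Matrix.mul_assoc]
          abel
      _ = 0 := by
          rw [nonsing_inv_mul_cancel_right M B ((isUnit_iff_isUnit_det M).mp hunit), sub_self]
  have hdisj := disjoint_span_range_row_of_rank_fromRows (A := A) (B := B) (by omega)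
  exact sub_eq_zero.mp <| eq_zero_of_mul_eq_zero_of_linearIndependent_row
    (linearIndependent_row_of_rank_eq_card (by rw [hB, Fintype.card_fin]))
    (mul_eq_zero_of_disjoint_span_range_row hdisj hkey)

theorem stmt_1 (n p m : ℕ) (hnp : p < n) (hm : 0 < m) (hmp : m < p)
    (A : Matrix (Fin n) (Fin p) ℝ) (B : Matrix (Fin m) (Fin p) ℝ)
    (hA : A.rank = p - m) (hB : B.rank = m)
    (hAB : (Matrix.fromRows A B).rank = p) :
    IsUnit (Aᵀ * A + Bᵀ * B) ∧ B * (Aᵀ * A + Bᵀ * B)⁻¹ * Bᵀ = 1 :=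
  stmt_1_general n p m A B hA hB hAB
end

section
/- Let Λ be an n×n diagonal real matrix with positive diagonal entries, X an n×p real matrix of full column rank p with n > p, and P = X(XᵀΛ⁻¹X)⁻¹XᵀΛ⁻¹ (the weighted least squares projection matrix; XᵀΛ⁻¹X is invertible since X has full column rank and Λ⁻¹ is positive definite). Then P_{ij} P_{ji} ≥ 0 for all i, j = 1, …, n. -/
open Matrix

theorem stmt_2 (n p : ℕ) (hnp : p < n) (d : Fin n → ℝ) (hd : ∀ i, 0 < d i)
    (X : Matrix (Fin n) (Fin p) ℝ) (hX : X.rank = p)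
    (P : Matrix (Fin n) (Fin n) ℝ)
    (hP : P = X * (Xᵀ * (Matrix.diagonal d)⁻¹ * X)⁻¹ * Xᵀ * (Matrix.diagonal d)⁻¹) :
    ∀ i j, 0 ≤ P i j * P j i := by
  set D : Matrix (Fin n) (Fin n) ℝ := Matrix.diagonal d with hD
  set A : Matrix (Fin p) (Fin p) ℝ := Xᵀ * D⁻¹ * X with hA
  set S : Matrix (Fin n) (Fin n) ℝ := X * A⁻¹ * Xᵀ with hS
  have hDinv : D⁻¹ = Matrix.diagonal (fun i => (d i)⁻¹) := by
    apply Matrix.inv_eq_right_inv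
    rw [hD, Matrix.diagonal_mul_diagonal, ← Matrix.diagonal_one]
    have h : (fun i => d i * (d i)⁻¹) = fun _ => (1:ℝ) :=
      funext fun i => mul_inv_cancel₀ (ne_of_gt (hd i))
    rw [h]
  have hAT : Aᵀ = A := by
    rw [hA]
    simp [Matrix.transpose_mul, hDinv, Matrix.diagonal_transpose, Matrix.mul_assoc]
  have hST : Sᵀ = S := by
    rw [hS]
    simp only [Matrix.transpose_mul, Matrix.transpose_transpose,
      Matrix.transpose_nonsing_inv, hAT, Matrix.mul_assoc]
  have hPS : P = S * D⁻¹ := by rw [hP, hS, Matrix.mul_assoc, Matrix.mul_assoc]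
  intro i j
  have hPij : P i j = S i j * (d j)⁻¹ := by
    rw [hPS, hDinv, Matrix.mul_diagonal]
  have hPji : P j i = S j i * (d i)⁻¹ := by
    rw [hPS, hDinv, Matrix.mul_diagonal]
  have hSsymm : S j i = S i j := by
    conv_lhs => rw [← hST]
    rfl
  rw [hPij, hPji, hSsymm]
  have h1 : (0:ℝ) ≤ (d i)⁻¹ := le_of_lt (inv_pos.mpr (hd i))
  have h2 : (0:ℝ) ≤ (d j)⁻¹ := le_of_lt (inv_pos.mpr (hd j))
  have : S i j * (d j)⁻¹ * (S i j * (d i)⁻¹) = (S i j * S i j) * ((d j)⁻¹ * (d i)⁻¹) := by ring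
  rw [this]
  exact mul_nonneg (mul_self_nonneg _) (mul_nonneg h2 h1)
end

section
/- Let P be an M×M real idempotent matrix (P² = P) whose entries satisfy P_{ij} P_{ji} ≥ 0 for all i, j, and let γ ∈ ℝ^M. Set Ψ = diag(γ)(I_M − P), where diag(γ) is the diagonal matrix with diagonal entries γ_1, …, γ_M. Then tr(Ψ) = ∑_{i=1}^M γ_i (1 − P_{ii}) and tr(Ψ²) ≤ ∑_{i=1}^M γ_i² (1 − P_{ii}). -/
open Matrix

theorem stmt_5 (M : ℕ) (P : Matrix (Fin M) (Fin M) ℝ) (hidem : P * P = P)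
    (hsign : ∀ i j, 0 ≤ P i j * P j i) (γ : Fin M → ℝ)
    (Ψ : Matrix (Fin M) (Fin M) ℝ) (hΨ : Ψ = Matrix.diagonal γ * (1 - P)) :
    Ψ.trace = ∑ i, γ i * (1 - P i i) ∧
    (Ψ * Ψ).trace ≤ ∑ i, γ i ^ 2 * (1 - P i i) := by
  set Q : Matrix (Fin M) (Fin M) ℝ := 1 - P with hQdef
  have hQ : Q * Q = Q := by
    simp [hQdef, mul_sub, sub_mul, hidem]
  have ha : ∀ i j, 0 ≤ Q i j * Q j i := by
    intro i j
    by_cases h : i = j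
    · subst h; exact mul_self_nonneg _
    · have h1 : Q i j = -P i j := by
        simp [hQdef, Matrix.one_apply_ne h]
      have h2 : Q j i = -P j i := by
        simp [hQdef, Matrix.one_apply_ne (Ne.symm h)]
      rw [h1, h2, neg_mul_neg]; exact hsign i j
  have hΨe : ∀ i j, Ψ i j = γ i * Q i j := by
    intro i j; rw [hΨ, Matrix.diagonal_mul]
  have hQdiag : ∀ i, Q i i = 1 - P i i := by
    intro i; simp [hQdef]
  have hQii : ∀ i, Q i i = ∑ j, Q i j * Q j i := by
    intro i
    conv_lhs => rw [← hQ]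
    rw [Matrix.mul_apply]
  constructor
  · rw [Matrix.trace]
    simp only [Matrix.diag, hΨe, hQdiag]
  · have lhs_eq : (Ψ * Ψ).trace = ∑ i, ∑ j, (γ i * γ j) * (Q i j * Q j i) := by
      rw [Matrix.trace]
      simp only [Matrix.diag, Matrix.mul_apply, hΨe]
      congr 1; ext i; congr 1; ext j; ring
    have rhs_eq : ∑ i, γ i ^ 2 * (1 - P i i) = ∑ i, ∑ j, γ i ^ 2 * (Q i j * Q j i) := by
      congr 1; ext i
      rw [← hQdiag, hQii, Finset.mul_sum]
    rw [lhs_eq, rhs_eq]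
    have swap : ∑ i, ∑ j, γ j ^ 2 * (Q i j * Q j i)
        = ∑ i, ∑ j, γ i ^ 2 * (Q i j * Q j i) := by
      rw [Finset.sum_comm]
      congr 1; ext i; congr 1; ext j; ring
    have key : 0 ≤ ∑ i, ∑ j, (γ i - γ j) ^ 2 * (Q i j * Q j i) := by
      apply Finset.sum_nonneg; intro i _
      apply Finset.sum_nonneg; intro j _
      exact mul_nonneg (sq_nonneg _) (ha i j)
    have expand : ∑ i, ∑ j, (γ i - γ j) ^ 2 * (Q i j * Q j i)
        = ∑ i, ∑ j, γ i ^ 2 * (Q i j * Q j i)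
          + ∑ i, ∑ j, γ j ^ 2 * (Q i j * Q j i)
          - 2 * ∑ i, ∑ j, (γ i * γ j) * (Q i j * Q j i) := by
      rw [Finset.mul_sum, ← Finset.sum_add_distrib, ← Finset.sum_sub_distrib]
      congr 1; ext i
      rw [Finset.mul_sum, ← Finset.sum_add_distrib, ← Finset.sum_sub_distrib]
      congr 1; ext j; ring
    rw [expand, swap] at key
    linarith
end

section
/- Let Σ be an n×n symmetric positive definite real matrix, X an n×p real matrix of full column rank p with n > p, and W an n×(n−p) real matrix satisfying WᵀW = I_{n−p} and XᵀW = 0 (the p×(n−p) zero matrix). Then WᵀΣW is invertible and Σ⁻¹ − Σ⁻¹X(XᵀΣ⁻¹X)⁻¹XᵀΣ⁻¹ = W(WᵀΣW)⁻¹Wᵀ. -/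
/-! Both `P = S⁻¹ - S⁻¹X(XᵀS⁻¹X)⁻¹XᵀS⁻¹` and `Q = W(WᵀSW)⁻¹Wᵀ` send `X` to `0` and `SW` to `W`.
Since `WᵀX = 0` and `WᵀSW` is positive definite, the `n` columns of `SW` and `X` are linearly
independent, hence a basis of `ℝⁿ`, so `P = Q`. -/

open Matrix

namespace Matrix

variable {l m n k R K : Type*} [Fintype n]

theorem mulVec_injective_of_rank_eq_card [Field K] {A : Matrix m n K}
    (h : A.rank = Fintype.card n) : Function.Injective A.mulVec :=
  mulVec_injective_iff.mpr <| linearIndependent_iff_card_eq_finrank_span.mpr <| by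
    rw [Set.finrank, ← rank_eq_finrank_span_cols, h]

theorem mulVec_surjective_of_injective_of_card_eq [Fintype m] [Field K] {A : Matrix m n K}
    (hcard : Fintype.card n = Fintype.card m) (h : Function.Injective A.mulVec) :
    Function.Surjective A.mulVec :=
  (LinearMap.injective_iff_surjective_of_finrank_eq_finrank (f := A.mulVecLin)
    (by simp [hcard])).mp h

theorem eq_of_mul_eq_mul_of_mulVec_surjective [Fintype m] [DecidableEq m] [CommSemiring R]
    {A B : Matrix l m R} {M : Matrix m n R} (hM : Function.Surjective M.mulVec)
    (h : A * M = B * M) : A = B := by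
  obtain ⟨N, hN⟩ := mulVec_surjective_iff_exists_right_inverse.mp hM
  simpa [Matrix.mul_assoc, hN] using congrArg (· * N) h

theorem fromCols_mulVec_injective [Fintype m] [Fintype k] [CommRing R] {L : Matrix l m R}
    {Y : Matrix m n R} {X : Matrix m k R} (hY : Function.Injective (L * Y).mulVec)
    (hX : Function.Injective X.mulVec) (hLX : L * X = 0) :
    Function.Injective (fromCols Y X).mulVec := by
  rw [← coe_mulVecLin, injective_iff_map_eq_zero]
  intro v hv
  rw [coe_mulVecLin, fromCols_mulVec] at hv
  have hinl : v ∘ Sum.inl = 0 := by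
    refine hY.eq_iff' (mulVec_zero _) |>.mp ?_
    simpa [mulVec_add, mulVec_mulVec, hLX] using congrArg (L *ᵥ ·) hv
  have hinr : v ∘ Sum.inr = 0 :=
    hX.eq_iff' (mulVec_zero _) |>.mp (by simpa [hinl] using hv)
  ext (i | i)
  · exact congrFun hinl i
  · exact congrFun hinr i

section GeneralizedLeastSquares

variable [Fintype m] [DecidableEq m] [Fintype k] [DecidableEq k] [CommRing R]
  {S : Matrix m m R} {X : Matrix m k R}

theorem inv_sub_gls_mul_self (hC : IsUnit (Xᵀ * S⁻¹ * X).det) :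
    (S⁻¹ - S⁻¹ * X * (Xᵀ * S⁻¹ * X)⁻¹ * Xᵀ * S⁻¹) * X = 0 := by
  rw [Matrix.sub_mul, sub_eq_zero]
  calc S⁻¹ * X = S⁻¹ * X * ((Xᵀ * S⁻¹ * X)⁻¹ * (Xᵀ * S⁻¹ * X)) := by
        rw [nonsing_inv_mul _ hC, Matrix.mul_one]
    _ = _ := by simp only [Matrix.mul_assoc]

theorem inv_sub_gls_mul_mul {l : Type*} {W : Matrix m l R} (hS : IsUnit S.det)
    (hXW : Xᵀ * W = 0) :
    (S⁻¹ - S⁻¹ * X * (Xᵀ * S⁻¹ * X)⁻¹ * Xᵀ * S⁻¹) * (S * W) = W := by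
  rw [Matrix.sub_mul]
  simp only [Matrix.mul_assoc, nonsing_inv_mul_cancel_left _ _ hS, hXW, Matrix.mul_zero,
    sub_zero]

end GeneralizedLeastSquares

end Matrix

theorem stmt_7_general (n p : ℕ)
    (S : Matrix (Fin n) (Fin n) ℝ) (hS : S.PosDef)
    (X : Matrix (Fin n) (Fin p) ℝ) (hX : X.rank = p)
    (W : Matrix (Fin n) (Fin (n - p)) ℝ) (hW : Wᵀ * W = 1) (hXW : Xᵀ * W = 0) :
    IsUnit (Wᵀ * S * W) ∧
    S⁻¹ - S⁻¹ * X * (Xᵀ * S⁻¹ * X)⁻¹ * Xᵀ * S⁻¹ = W * (Wᵀ * S * W)⁻¹ * Wᵀ := by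
  have hp : p ≤ n := hX ▸ X.rank_le_height
  have hXinj : Function.Injective X.mulVec := mulVec_injective_of_rank_eq_card (by simpa using hX)
  have hWinj : Function.Injective W.mulVec := fun v w h => by
    simpa [mulVec_mulVec, hW] using congrArg (Wᵀ *ᵥ ·) h
  have hC : (Xᵀ * S⁻¹ * X).PosDef := by simpa using hS.inv.conjTranspose_mul_mul_same hXinj
  have hD : (Wᵀ * S * W).PosDef := by simpa using hS.conjTranspose_mul_mul_same hWinj
  have hWX : Wᵀ * X = 0 := by simpa using congrArg transpose hXW
  have hM : Function.Surjective (fromCols (S * W) X).mulVec := by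
    have hcard : Fintype.card (Fin (n - p) ⊕ Fin p) = Fintype.card (Fin n) := by
      simp only [Fintype.card_sum, Fintype.card_fin]; omega
    refine mulVec_surjective_of_injective_of_card_eq hcard
      (fromCols_mulVec_injective (L := Wᵀ) ?_ hXinj hWX)
    simpa [Matrix.mul_assoc] using mulVec_injective_iff_isUnit.mpr hD.isUnit
  refine ⟨hD.isUnit, eq_of_mul_eq_mul_of_mulVec_surjective hM ?_⟩
  rw [mul_fromCols, mul_fromCols, inv_sub_gls_mul_self hC.det_pos.ne'.isUnit,
    inv_sub_gls_mul_mul hS.det_pos.ne'.isUnit hXW]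
  simp only [Matrix.mul_assoc, hWX, Matrix.mul_zero]
  rw [← Matrix.mul_assoc Wᵀ S W, nonsing_inv_mul _ hD.det_pos.ne'.isUnit, Matrix.mul_one]

theorem stmt_7 (n p : ℕ) (hnp : p < n)
    (S : Matrix (Fin n) (Fin n) ℝ) (hS : S.PosDef)
    (X : Matrix (Fin n) (Fin p) ℝ) (hX : X.rank = p)
    (W : Matrix (Fin n) (Fin (n - p)) ℝ) (hW : Wᵀ * W = 1) (hXW : Xᵀ * W = 0) :
    IsUnit (Wᵀ * S * W) ∧
    S⁻¹ - S⁻¹ * X * (Xᵀ * S⁻¹ * X)⁻¹ * Xᵀ * S⁻¹ = W * (Wᵀ * S * W)⁻¹ * Wᵀ :=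
  stmt_7_general n p S hS X hX W hW hXW
end

section
/- Let Σ be an n×n symmetric positive definite real matrix, X an n×p real matrix of full column rank p with n > p, and W an n×(n−p) real matrix satisfying WᵀW = I_{n−p} and XᵀW = 0. For z ∈ ℝⁿ, let β̂ = (XᵀΣ⁻¹X)⁻¹XᵀΣ⁻¹z be the generalized least squares estimate and S² = (z − Xβ̂)ᵀΣ⁻¹(z − Xβ̂). Then zᵀW(WᵀΣW)⁻¹Wᵀz = S². -/
/-!
Write `A = XᵀΣ⁻¹X` and `C = WᵀΣW`. The `n × n` block matrix `M = [X | ΣW]` has the left inverse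
`[A⁻¹XᵀΣ⁻¹ ; C⁻¹Wᵀ]` because `XᵀW = 0`; since `M` is square, this is also a right inverse, which reads
`XA⁻¹XᵀΣ⁻¹ + ΣWC⁻¹Wᵀ = 1`, i.e. `WC⁻¹Wᵀ = Σ⁻¹ - Σ⁻¹XA⁻¹XᵀΣ⁻¹`. The residual is
`z - Xβ̂ = (1 - XA⁻¹XᵀΣ⁻¹) z`, and the quadratic form of `Σ⁻¹` pulled back along `1 - XA⁻¹XᵀΣ⁻¹`
is that same matrix `Σ⁻¹ - Σ⁻¹XA⁻¹XᵀΣ⁻¹`.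
-/

open Matrix

theorem Matrix.mulVec_injective_of_rank_eq_card_s9 {K m n : Type*} [Field K] [Fintype m] [Fintype n]
    {A : Matrix m n K} (h : A.rank = Fintype.card n) : Function.Injective A.mulVec := by
  rw [mulVec_injective_iff, linearIndependent_iff_card_eq_finrank_span, Set.finrank,
    ← rank_eq_finrank_span_cols, h]

theorem Matrix.dotProduct_mulVec_mulVec_eq {R m n : Type*} [CommSemiring R] [Fintype m]
    [Fintype n] (M : Matrix n m R) (P : Matrix n n R) (z : m → R) :
    (M *ᵥ z) ⬝ᵥ (P *ᵥ (M *ᵥ z)) = z ⬝ᵥ ((Mᵀ * P * M) *ᵥ z) := by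
  rw [← mulVec_mulVec, ← mulVec_mulVec, dotProduct_mulVec z, vecMul_transpose]

section

variable {R n p q : Type*} [CommRing R] [Fintype n] [Fintype p] [Fintype q]
  [DecidableEq n] [DecidableEq p] [DecidableEq q]

theorem Matrix.transpose_one_sub_mul_mul_one_sub_eq (P : Matrix n n R) (X : Matrix n p R)
    (hP : Pᵀ = P) (hA : IsUnit (Xᵀ * P * X).det) :
    (1 - X * (Xᵀ * P * X)⁻¹ * Xᵀ * P)ᵀ * P * (1 - X * (Xᵀ * P * X)⁻¹ * Xᵀ * P)
      = P - P * X * (Xᵀ * P * X)⁻¹ * Xᵀ * P := by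
  set A := Xᵀ * P * X
  have hAT : Aᵀ = A := by simp only [A, transpose_mul, transpose_transpose, hP, Matrix.mul_assoc]
  have hHT : (X * A⁻¹ * Xᵀ * P)ᵀ * P = P * X * A⁻¹ * Xᵀ * P := by
    simp only [transpose_mul, transpose_transpose, transpose_nonsing_inv, hAT, hP,
      Matrix.mul_assoc]
  have hGH : P * X * A⁻¹ * Xᵀ * P * (X * A⁻¹ * Xᵀ * P) = P * X * A⁻¹ * Xᵀ * P :=
    calc P * X * A⁻¹ * Xᵀ * P * (X * A⁻¹ * Xᵀ * P)
        = P * X * (A⁻¹ * A) * A⁻¹ * Xᵀ * P := by simp only [A, Matrix.mul_assoc]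
      _ = P * X * A⁻¹ * Xᵀ * P := by rw [nonsing_inv_mul _ hA, Matrix.mul_one]
  rw [transpose_sub, transpose_one, Matrix.sub_mul, Matrix.one_mul, hHT, Matrix.sub_mul,
    Matrix.mul_sub, Matrix.mul_sub, Matrix.mul_one, Matrix.mul_one, hGH]
  simp only [Matrix.mul_assoc]
  abel

theorem Matrix.mul_inv_mul_transpose_eq_of_transpose_mul_eq_zero (S : Matrix n n R)
    (X : Matrix n p R) (W : Matrix n q R) (e : n ≃ p ⊕ q) (hS : IsUnit S.det)
    (hA : IsUnit (Xᵀ * S⁻¹ * X).det) (hC : IsUnit (Wᵀ * S * W).det) (hXW : Xᵀ * W = 0) :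
    W * (Wᵀ * S * W)⁻¹ * Wᵀ = S⁻¹ - S⁻¹ * X * (Xᵀ * S⁻¹ * X)⁻¹ * Xᵀ * S⁻¹ := by
  have hWX : Wᵀ * X = 0 := by simpa using congrArg transpose hXW
  have hLM : fromRows ((Xᵀ * S⁻¹ * X)⁻¹ * Xᵀ * S⁻¹) ((Wᵀ * S * W)⁻¹ * Wᵀ) * fromCols X (S * W)
      = 1 := by
    rw [fromRows_mul_fromCols, ← fromBlocks_one]
    congr 1
    · rw [Matrix.mul_assoc, Matrix.mul_assoc, ← Matrix.mul_assoc Xᵀ, nonsing_inv_mul _ hA]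
    · rw [Matrix.mul_assoc, ← Matrix.mul_assoc S⁻¹, nonsing_inv_mul _ hS, Matrix.one_mul,
        Matrix.mul_assoc, hXW, Matrix.mul_zero]
    · rw [Matrix.mul_assoc, hWX, Matrix.mul_zero]
    · rw [Matrix.mul_assoc, ← Matrix.mul_assoc Wᵀ, nonsing_inv_mul _ hC]
  have hML := (fromCols_mul_fromRows_eq_one_comm e _ _ _ _).mpr hLM
  rw [fromCols_mul_fromRows, ← eq_sub_iff_add_eq'] at hML
  calc W * (Wᵀ * S * W)⁻¹ * Wᵀ = S⁻¹ * (S * (W * ((Wᵀ * S * W)⁻¹ * Wᵀ))) := by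
        rw [← Matrix.mul_assoc, nonsing_inv_mul _ hS, Matrix.one_mul, Matrix.mul_assoc]
    _ = S⁻¹ - S⁻¹ * X * (Xᵀ * S⁻¹ * X)⁻¹ * Xᵀ * S⁻¹ := by
        rw [← Matrix.mul_assoc S, hML, Matrix.mul_sub, Matrix.mul_one]
        simp only [Matrix.mul_assoc]

end

theorem Matrix.PosDef.isUnit_det_transpose_mul_mul {m n : Type*} [Fintype m] [Fintype n]
    [DecidableEq m] {A : Matrix n n ℝ} (hA : A.PosDef) {B : Matrix n m ℝ}
    (hB : Function.Injective B.mulVec) : IsUnit (Bᵀ * A * B).det :=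
  (isUnit_iff_isUnit_det _).mp (hA.conjTranspose_mul_mul_same hB).isUnit

theorem stmt_9 (n p : ℕ) (hnp : p < n)
    (S : Matrix (Fin n) (Fin n) ℝ) (hS : S.PosDef)
    (X : Matrix (Fin n) (Fin p) ℝ) (hX : X.rank = p)
    (W : Matrix (Fin n) (Fin (n - p)) ℝ) (hW : Wᵀ * W = 1) (hXW : Xᵀ * W = 0)
    (z : Fin n → ℝ) (βh : Fin p → ℝ)
    (hβ : βh = ((Xᵀ * S⁻¹ * X)⁻¹ * Xᵀ * S⁻¹) *ᵥ z)
    (S2 : ℝ) (hS2 : S2 = (z - X *ᵥ βh) ⬝ᵥ (S⁻¹ *ᵥ (z - X *ᵥ βh))) :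
    z ⬝ᵥ ((W * (Wᵀ * S * W)⁻¹ * Wᵀ) *ᵥ z) = S2 := by
  have hXinj : Function.Injective X.mulVec :=
    mulVec_injective_of_rank_eq_card_s9 (by rw [hX, Fintype.card_fin])
  have hWinj : Function.Injective W.mulVec :=
    Function.LeftInverse.injective (g := Wᵀ.mulVec) fun x => by rw [mulVec_mulVec, hW, one_mulVec]
  have hSinvT : (S⁻¹)ᵀ = S⁻¹ := by
    simpa [conjTranspose_eq_transpose_of_trivial] using hS.inv.isHermitian.eq
  have e : Fin n ≃ Fin p ⊕ Fin (n - p) :=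
    (finCongr (Nat.add_sub_cancel' hnp.le).symm).trans finSumFinEquiv.symm
  have hresid : z - X *ᵥ βh = (1 - X * (Xᵀ * S⁻¹ * X)⁻¹ * Xᵀ * S⁻¹) *ᵥ z := by
    rw [hβ, mulVec_mulVec, sub_mulVec, one_mulVec]
    simp only [Matrix.mul_assoc]
  rw [hS2, hresid, dotProduct_mulVec_mulVec_eq,
    transpose_one_sub_mul_mul_one_sub_eq _ _ hSinvT (hS.inv.isUnit_det_transpose_mul_mul hXinj),
    mul_inv_mul_transpose_eq_of_transpose_mul_eq_zero S X W e
      ((isUnit_iff_isUnit_det _).mp hS.isUnit) (hS.inv.isUnit_det_transpose_mul_mul hXinj)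
      (hS.isUnit_det_transpose_mul_mul hWinj) hXW]
end

section
/- Let Σ be an n×n symmetric positive definite real matrix, X an n×p real matrix of full column rank p with n > p, and W an n×(n−p) real matrix satisfying WᵀW = I_{n−p} and XᵀW = 0. Then det(WᵀΣW) · det(XᵀX) = det(Σ) · det(XᵀΣ⁻¹X). -/
/-!
Complete `X` and `W` to the square matrices `B = [X | W]` and `A = [S⁻¹X | W]`. Because
`XᵀW = 0` and `WᵀW = 1`, the products `BᵀB` and `AᵀSA` are block diagonal and `BᵀA` is block
triangular, so `det B² = det (XᵀX)`, `det S · det A² = det (XᵀS⁻¹X) · det (WᵀSW)` and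
`det B · det A = det (XᵀS⁻¹X)`. Eliminating `det A` and `det B` gives the identity after
cancelling `det (XᵀS⁻¹X)`, which is positive because `XᵀS⁻¹X` is positive definite.
-/

open Matrix

namespace Matrix

section
variable {R k l m : Type*} [CommRing R] [Fintype k] [Fintype l] [Fintype m]
  [DecidableEq k] [DecidableEq l] [DecidableEq m]

theorem det_reindex_fromCols_mul_det_mul_det (e : k ⊕ l ≃ m) (X Y : Matrix m k R)
    (V W : Matrix m l R) (Q : Matrix m m R) :
    (reindex (.refl m) e (fromCols X V)).det * Q.det * (reindex (.refl m) e (fromCols Y W)).det =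
      (fromBlocks (Xᵀ * Q * Y) (Xᵀ * Q * W) (Vᵀ * Q * Y) (Vᵀ * Q * W)).det := by
  have hprod : (reindex (.refl m) e (fromCols X V))ᵀ * Q * reindex (.refl m) e (fromCols Y W) =
      reindex e e (fromBlocks (Xᵀ * Q * Y) (Xᵀ * Q * W) (Vᵀ * Q * Y) (Vᵀ * Q * W)) := by
    rw [← fromRows_mul_fromCols, ← fromRows_mul, ← transpose_fromCols, transpose_reindex]
    simp only [reindex_apply, Equiv.refl_symm, Equiv.coe_refl]
    rw [submatrix_mul _ _ _ id _ Function.bijective_id,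
      submatrix_mul _ _ _ id _ Function.bijective_id, submatrix_id_id]
  rw [← det_transpose, ← det_mul, ← det_mul, hprod, det_reindex_self]

end

theorem mulVec_injective_of_rank_eq {K m n : Type*} [Field K] [Fintype m] [Fintype n]
    {A : Matrix m n K} (hA : A.rank = Fintype.card n) : Function.Injective A.mulVec :=
  mulVec_injective_iff.mpr <| linearIndependent_iff_card_eq_finrank_span.mpr <| by
    rw [Set.finrank, ← rank_eq_finrank_span_cols, hA]

theorem det_transpose_mul_mul_mul_det_transpose_mul_self {k l m : Type*} [Fintype k]
    [Fintype l] [Fintype m] [DecidableEq k] [DecidableEq l] [DecidableEq m] (e : k ⊕ l ≃ m)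
    {S : Matrix m m ℝ} (hS : S.PosDef) {X : Matrix m k ℝ} (hX : Function.Injective X.mulVec)
    {W : Matrix m l ℝ} (hW : Wᵀ * W = 1) (hXW : Xᵀ * W = 0) :
    (Wᵀ * S * W).det * (Xᵀ * X).det = S.det * (Xᵀ * S⁻¹ * X).det := by
  set B := reindex (.refl m) e (fromCols X W)
  set A := reindex (.refl m) e (fromCols (S⁻¹ * X) W)
  have hSu : IsUnit S.det := hS.isUnit.map detMonoidHom
  have hSinvT : (S⁻¹)ᵀ = S⁻¹ := by
    rw [transpose_nonsing_inv, ← conjTranspose_eq_transpose_of_trivial, hS.isHermitian.eq]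
  have hWX : Wᵀ * X = 0 := by rw [← transpose_transpose X, ← transpose_mul, hXW, transpose_zero]
  have hBB : B.det * B.det = (Xᵀ * X).det := by
    simpa [-reindex_apply, hXW, hWX, hW, det_fromBlocks_zero₂₁] using
      det_reindex_fromCols_mul_det_mul_det e X X W W 1
  have hASA : A.det * S.det * A.det = (Xᵀ * S⁻¹ * X).det * (Wᵀ * S * W).det := by
    simpa [-reindex_apply, transpose_mul, hSinvT, Matrix.mul_assoc, mul_nonsing_inv _ hSu,
      nonsing_inv_mul _ hSu, hXW, hWX, det_fromBlocks_zero₂₁] using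
      det_reindex_fromCols_mul_det_mul_det e (S⁻¹ * X) (S⁻¹ * X) W W S
  have hBA : B.det * A.det = (Xᵀ * S⁻¹ * X).det := by
    simpa [-reindex_apply, hXW, hW, Matrix.mul_assoc, det_fromBlocks_zero₁₂] using
      det_reindex_fromCols_mul_det_mul_det e X (S⁻¹ * X) W W 1
  have hpos : 0 < (Xᵀ * S⁻¹ * X).det := by
    simpa only [conjTranspose_eq_transpose_of_trivial] using
      (hS.inv.conjTranspose_mul_mul_same hX).det_pos
  refine mul_right_cancel₀ hpos.ne' ?_
  calc (Wᵀ * S * W).det * (Xᵀ * X).det * (Xᵀ * S⁻¹ * X).det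
      = (A.det * S.det * A.det) * (B.det * B.det) := by rw [hBB, hASA]; ring
    _ = S.det * (B.det * A.det) * (B.det * A.det) := by ring
    _ = S.det * (Xᵀ * S⁻¹ * X).det * (Xᵀ * S⁻¹ * X).det := by rw [hBA]

end Matrix

theorem stmt_10 (n p : ℕ) (hnp : p < n)
    (S : Matrix (Fin n) (Fin n) ℝ) (hS : S.PosDef)
    (X : Matrix (Fin n) (Fin p) ℝ) (hX : X.rank = p)
    (W : Matrix (Fin n) (Fin (n - p)) ℝ) (hW : Wᵀ * W = 1) (hXW : Xᵀ * W = 0) :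
    (Wᵀ * S * W).det * (Xᵀ * X).det = S.det * (Xᵀ * S⁻¹ * X).det :=
  det_transpose_mul_mul_mul_det_transpose_mul_self
    (finSumFinEquiv.trans (finCongr (Nat.add_sub_of_le hnp.le))) hS
    (mulVec_injective_of_rank_eq (by rw [hX, Fintype.card_fin])) hW hXW
end

section
/- Let Σ be an n×n symmetric positive definite real matrix, X an n×p real matrix of full column rank p with n > p, and W an n×(n−p) real matrix satisfying WᵀW = I_{n−p} and XᵀW = 0. Set Q = Σ⁻¹ − Σ⁻¹X(XᵀΣ⁻¹X)⁻¹XᵀΣ⁻¹. Then for every n×n symmetric real matrix A: tr(AQ) = tr((WᵀAW)(WᵀΣW)⁻¹) and tr((AQ)²) = tr(((WᵀAW)(WᵀΣW)⁻¹)²). Consequently the two reference prior expressions tr[(AQ)²] − (tr(AQ))²/(n−p) and tr[((WᵀAW)(WᵀΣW)⁻¹)²] − (tr((WᵀAW)(WᵀΣW)⁻¹))²/(n−p) are equal. -/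
/-! The two quadratic forms agree because `Q = W (WᵀSW)⁻¹ Wᵀ`: both sides annihilate `X` and
send `SW` to `W`, and the columns of `X` and `SW` together form a basis (apply `Wᵀ` to a relation
`Xa + SWb = 0`, using `WᵀX = 0` and the invertibility of `WᵀSW`). Once `Q` has this form, both
trace identities are cyclicity of the trace. -/

open Matrix

namespace Matrix

section Field

variable {K : Type*} [Field K] {m n p q : Type*} [Fintype n]

lemma mulVec_injective_of_isUnit_mul [Fintype p] [DecidableEq p] {A : Matrix p n K}
    {B : Matrix n p K} (h : IsUnit (A * B)) : Function.Injective B.mulVec := fun v w hvw => by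
  have := congrArg A.mulVec hvw
  rwa [mulVec_mulVec, mulVec_mulVec, (mulVec_injective_iff_isUnit.mpr h).eq_iff] at this

lemma mulVec_injective_of_rank_eq_s11 [DecidableEq n] {X : Matrix m n K}
    (hX : X.rank = Fintype.card n) : Function.Injective X.mulVec := by
  rw [mulVec_injective_iff, linearIndependent_iff_card_eq_finrank_span, ← hX,
    rank_eq_finrank_span_cols, Set.finrank]

lemma mulVec_injective_fromCols [Fintype p] [Fintype q] [DecidableEq q]
    {X : Matrix n p K} {Y : Matrix n q K} {V : Matrix q n K} (hX : Function.Injective X.mulVec)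
    (hVX : V * X = 0) (hVY : IsUnit (V * Y)) :
    Function.Injective (fromCols X Y).mulVec := by
  rw [← coe_mulVecLin, injective_iff_map_eq_zero]
  intro v hv
  rw [coe_mulVecLin, ← Sum.elim_comp_inl_inr v, fromCols_mulVec_sumElim] at hv
  have hr : v ∘ Sum.inr = 0 := by
    have := congrArg V.mulVec hv
    rw [mulVec_add, mulVec_mulVec, mulVec_mulVec, hVX, zero_mulVec, zero_add, mulVec_zero] at this
    exact (mulVec_injective_iff_isUnit.mpr hVY).eq_iff' (mulVec_zero _) |>.mp this
  have hl : v ∘ Sum.inl = 0 := by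
    rw [hr, mulVec_zero, add_zero] at hv
    exact hX.eq_iff' (mulVec_zero _) |>.mp hv
  rw [← Sum.elim_comp_inl_inr v, hl, hr]
  exact Sum.elim_zero_zero

lemma eq_of_mul_eq_mul_of_mulVec_injective [Fintype m] [DecidableEq n] {C : Matrix n m K}
    (hcard : Fintype.card m = Fintype.card n) (hC : Function.Injective C.mulVec)
    {P Q : Matrix p n K} (h : P * C = Q * C) : P = Q := by
  have hCsurj : Function.Surjective C.mulVec := by
    rw [← coe_mulVecLin] at hC ⊢
    exact (LinearMap.injective_iff_surjective_of_finrank_eq_finrank (by simpa using hcard)).mp hC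
  refine ext_of_mulVec_single fun i => ?_
  obtain ⟨v, hv⟩ := hCsurj (Pi.single i 1)
  rw [← hv, mulVec_mulVec, mulVec_mulVec, h]

theorem inv_sub_inv_mul_eq_mul_inv_mul_transpose [Fintype p] [Fintype q] [DecidableEq n]
    [DecidableEq p] [DecidableEq q] {S : Matrix n n K} {X : Matrix n p K} {W : Matrix n q K}
    (hS : IsUnit S) (hXSX : IsUnit (Xᵀ * S⁻¹ * X)) (hWSW : IsUnit (Wᵀ * S * W)) (hXW : Xᵀ * W = 0)
    (hcard : Fintype.card p + Fintype.card q = Fintype.card n) :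
    S⁻¹ - S⁻¹ * X * (Xᵀ * S⁻¹ * X)⁻¹ * Xᵀ * S⁻¹ = W * (Wᵀ * S * W)⁻¹ * Wᵀ := by
  have hWX : Wᵀ * X = 0 := by simpa using congrArg transpose hXW
  have hSinv : S⁻¹ * S = 1 := nonsing_inv_mul S ((isUnit_iff_isUnit_det S).mp hS)
  have hXSXinv := nonsing_inv_mul _ ((isUnit_iff_isUnit_det _).mp hXSX)
  have hWSWinv := nonsing_inv_mul _ ((isUnit_iff_isUnit_det _).mp hWSW)
  refine eq_of_mul_eq_mul_of_mulVec_injective (C := fromCols X (S * W)) (by simpa using hcard)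
    (mulVec_injective_fromCols (mulVec_injective_of_isUnit_mul hXSX) hWX
      (by rwa [← Matrix.mul_assoc])) ?_
  rw [mul_fromCols, mul_fromCols]
  congr 1
  · calc (S⁻¹ - S⁻¹ * X * (Xᵀ * S⁻¹ * X)⁻¹ * Xᵀ * S⁻¹) * X
          = S⁻¹ * X - S⁻¹ * X * ((Xᵀ * S⁻¹ * X)⁻¹ * (Xᵀ * S⁻¹ * X)) := by
            simp only [Matrix.sub_mul, Matrix.mul_assoc]
      _ = W * (Wᵀ * S * W)⁻¹ * Wᵀ * X := by
            rw [hXSXinv, Matrix.mul_one, sub_self, Matrix.mul_assoc, hWX, Matrix.mul_zero]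
  · calc (S⁻¹ - S⁻¹ * X * (Xᵀ * S⁻¹ * X)⁻¹ * Xᵀ * S⁻¹) * (S * W)
          = S⁻¹ * S * W - S⁻¹ * X * (Xᵀ * S⁻¹ * X)⁻¹ * (Xᵀ * (S⁻¹ * S) * W) := by
            simp only [Matrix.sub_mul, Matrix.mul_assoc]
      _ = W * ((Wᵀ * S * W)⁻¹ * (Wᵀ * S * W)) := by
            rw [hSinv, hWSWinv, Matrix.mul_one, Matrix.one_mul, Matrix.mul_one, hXW,
              Matrix.mul_zero, sub_zero]
      _ = W * (Wᵀ * S * W)⁻¹ * Wᵀ * (S * W) := by simp only [Matrix.mul_assoc]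

end Field

section CommRing

variable {R : Type*} [CommRing R] {n q : Type*} [Fintype n] [Fintype q]

lemma trace_mul_mul_mul_transpose (A : Matrix n n R) (W : Matrix n q R) (M : Matrix q q R) :
    (A * (W * M * Wᵀ)).trace = (Wᵀ * A * W * M).trace := by
  rw [← Matrix.mul_assoc, trace_mul_comm, ← Matrix.mul_assoc, ← Matrix.mul_assoc]

lemma trace_mul_self_mul_mul_mul_transpose (A : Matrix n n R) (W : Matrix n q R)
    (M : Matrix q q R) :
    (A * (W * M * Wᵀ) * (A * (W * M * Wᵀ))).trace =
      (Wᵀ * A * W * M * (Wᵀ * A * W * M)).trace := by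
  rw [show A * (W * M * Wᵀ) * (A * (W * M * Wᵀ)) = A * W * M * (Wᵀ * A * W * M * Wᵀ) by
    simp only [Matrix.mul_assoc], trace_mul_comm]
  simp only [Matrix.mul_assoc]

end CommRing

lemma PosDef.transpose_mul_mul_same {n m : Type*} [Fintype n] [Fintype m] {S : Matrix n n ℝ}
    (hS : S.PosDef) {B : Matrix n m ℝ} (hB : Function.Injective B.mulVec) :
    (Bᵀ * S * B).PosDef := by
  simpa only [conjTranspose_eq_transpose_of_trivial] using hS.conjTranspose_mul_mul_same hB

end Matrix

theorem stmt_11_general (n p : ℕ)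
    (S : Matrix (Fin n) (Fin n) ℝ) (hS : S.PosDef)
    (X : Matrix (Fin n) (Fin p) ℝ) (hX : X.rank = p)
    (W : Matrix (Fin n) (Fin (n - p)) ℝ) (hW : Wᵀ * W = 1) (hXW : Xᵀ * W = 0)
    (Q : Matrix (Fin n) (Fin n) ℝ)
    (hQ : Q = S⁻¹ - S⁻¹ * X * (Xᵀ * S⁻¹ * X)⁻¹ * Xᵀ * S⁻¹)
    (A : Matrix (Fin n) (Fin n) ℝ) :
    (A * Q).trace = ((Wᵀ * A * W) * (Wᵀ * S * W)⁻¹).trace ∧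
    ((A * Q) * (A * Q)).trace =
      (((Wᵀ * A * W) * (Wᵀ * S * W)⁻¹) * ((Wᵀ * A * W) * (Wᵀ * S * W)⁻¹)).trace ∧
    ((A * Q) * (A * Q)).trace - ((A * Q).trace) ^ 2 / ((n : ℝ) - p) =
      (((Wᵀ * A * W) * (Wᵀ * S * W)⁻¹) * ((Wᵀ * A * W) * (Wᵀ * S * W)⁻¹)).trace -
        (((Wᵀ * A * W) * (Wᵀ * S * W)⁻¹).trace) ^ 2 / ((n : ℝ) - p) := by
  have hpn : p ≤ n := hX ▸ X.rank_le_height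
  have hXinj : Function.Injective X.mulVec := mulVec_injective_of_rank_eq_s11 (by simpa using hX)
  have hWinj : Function.Injective W.mulVec :=
    mulVec_injective_of_isUnit_mul (A := Wᵀ) (hW ▸ isUnit_one)
  have hQW : Q = W * (Wᵀ * S * W)⁻¹ * Wᵀ := hQ.trans <|
    inv_sub_inv_mul_eq_mul_inv_mul_transpose hS.isUnit
      (hS.inv.transpose_mul_mul_same hXinj).isUnit (hS.transpose_mul_mul_same hWinj).isUnit hXW
      (by simp [hpn])
  have htrace : (A * Q).trace = (Wᵀ * A * W * (Wᵀ * S * W)⁻¹).trace :=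
    hQW ▸ trace_mul_mul_mul_transpose A W _
  have htrace_sq : (A * Q * (A * Q)).trace =
      (Wᵀ * A * W * (Wᵀ * S * W)⁻¹ * (Wᵀ * A * W * (Wᵀ * S * W)⁻¹)).trace :=
    hQW ▸ trace_mul_self_mul_mul_mul_transpose A W _
  exact ⟨htrace, htrace_sq, by rw [htrace, htrace_sq]⟩

theorem stmt_11 (n p : ℕ) (hnp : p < n)
    (S : Matrix (Fin n) (Fin n) ℝ) (hS : S.PosDef)
    (X : Matrix (Fin n) (Fin p) ℝ) (hX : X.rank = p)
    (W : Matrix (Fin n) (Fin (n - p)) ℝ) (hW : Wᵀ * W = 1) (hXW : Xᵀ * W = 0)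
    (Q : Matrix (Fin n) (Fin n) ℝ)
    (hQ : Q = S⁻¹ - S⁻¹ * X * (Xᵀ * S⁻¹ * X)⁻¹ * Xᵀ * S⁻¹)
    (A : Matrix (Fin n) (Fin n) ℝ) (hA : Aᵀ = A) :
    (A * Q).trace = ((Wᵀ * A * W) * (Wᵀ * S * W)⁻¹).trace ∧
    ((A * Q) * (A * Q)).trace =
      (((Wᵀ * A * W) * (Wᵀ * S * W)⁻¹) * ((Wᵀ * A * W) * (Wᵀ * S * W)⁻¹)).trace ∧
    ((A * Q) * (A * Q)).trace - ((A * Q).trace) ^ 2 / ((n : ℝ) - p) =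
      (((Wᵀ * A * W) * (Wᵀ * S * W)⁻¹) * ((Wᵀ * A * W) * (Wᵀ * S * W)⁻¹)).trace -
        (((Wᵀ * A * W) * (Wᵀ * S * W)⁻¹).trace) ^ 2 / ((n : ℝ) - p) :=
  stmt_11_general n p S hS X hX W hW hXW Q hQ A
end

section
/- Let s_1, …, s_n be points in ℝ^d and let D be the n×n real matrix with entries D_{ij} = ‖s_i − s_j‖², where ‖·‖ is the Euclidean norm. Then the rank of D is at most d + 2. -/
/-!
Expanding `‖x - y‖² = ‖x‖² - 2⟪x, y⟫ + ‖y‖²` writes the squared distance matrix as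
`u 1ᵀ + 1 uᵀ - 2 G` with `u i = ‖s i‖²` and `G` the Gram matrix of the points. The two outer
products have rank at most one, and `G = mᴴ m` for the `d × n` matrix `m` of coordinates of the
points in an orthonormal basis, so `rank G ≤ d`.
-/

open Matrix Module

namespace Matrix

variable {m n K : Type*} [Fintype n] [Field K]

theorem rank_add_le (A B : Matrix m n K) : (A + B).rank ≤ A.rank + B.rank := by
  have hrange : LinearMap.range (A + B).mulVecLin ≤
      LinearMap.range A.mulVecLin ⊔ LinearMap.range B.mulVecLin := by
    rintro _ ⟨x, rfl⟩
    rw [mulVecLin_add]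
    exact Submodule.add_mem_sup ⟨x, rfl⟩ ⟨x, rfl⟩
  exact (Submodule.finrank_mono hrange).trans (Submodule.finrank_add_le_finrank_add_finrank _ _)

theorem rank_gram_le_finrank {ι 𝕜 F : Type*} [Fintype ι] [RCLike 𝕜] [NormedAddCommGroup F]
    [InnerProductSpace 𝕜 F] [FiniteDimensional 𝕜 F] (v : ι → F) :
    (gram 𝕜 v).rank ≤ finrank 𝕜 F := by
  rw [gram_eq_conjTranspose_mul (stdOrthonormalBasis 𝕜 F)]
  exact (rank_mul_le_left _ _).trans ((rank_le_card_width _).trans (by simp))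

end Matrix

section SquaredDistance

variable {ι E : Type*} [NormedAddCommGroup E] [InnerProductSpace ℝ E]

theorem sqDistMatrix_eq (s : ι → E) :
    (of fun i j => ‖s i - s j‖ ^ 2 : Matrix ι ι ℝ) =
      vecMulVec (fun i => ‖s i‖ ^ 2) 1 + vecMulVec 1 (fun j => ‖s j‖ ^ 2) +
        (-2 : ℝ) • gram ℝ s := by
  ext i j
  simp only [of_apply, Matrix.add_apply, Matrix.smul_apply, vecMulVec_apply, gram_apply,
    Pi.one_apply, norm_sub_sq_real, smul_eq_mul]
  ring

theorem rank_sqDistMatrix_le [Fintype ι] [FiniteDimensional ℝ E] (s : ι → E) :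
    (of fun i j => ‖s i - s j‖ ^ 2 : Matrix ι ι ℝ).rank ≤ finrank ℝ E + 2 := by
  rw [sqDistMatrix_eq]
  calc _ ≤ (vecMulVec (fun i => ‖s i‖ ^ 2) 1).rank + (vecMulVec 1 (fun j => ‖s j‖ ^ 2)).rank +
          ((-2 : ℝ) • gram ℝ s).rank :=
        (rank_add_le _ _).trans (by gcongr; exact rank_add_le _ _)
    _ = (vecMulVec (fun i => ‖s i‖ ^ 2) 1).rank + (vecMulVec 1 (fun j => ‖s j‖ ^ 2)).rank +
          (gram ℝ s).rank := by
        rw [rank_smul_of_mem_nonZeroDivisors _ (mem_nonZeroDivisors_of_ne_zero (by norm_num))]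
    _ ≤ 1 + 1 + finrank ℝ E := by
        gcongr
        exacts [rank_vecMulVec_le _ _, rank_vecMulVec_le _ _, rank_gram_le_finrank s]
    _ = finrank ℝ E + 2 := by ring

end SquaredDistance

theorem stmt_15 (n d : ℕ) (s : Fin n → EuclideanSpace ℝ (Fin d)) :
    (Matrix.of fun i j : Fin n => ‖s i - s j‖ ^ 2 : Matrix (Fin n) (Fin n) ℝ).rank ≤ d + 2 := by
  simpa using rank_sqDistMatrix_le s
end
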